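/- Under the finite-atom assumption on L_#μ, the pushforward measure Φ_#μ on [0,1] equals the sum of the point masses Σ_{i=1}^N Δ_i · δ_{α_i} and the restriction of Lebesgue measure to the set [0,1] \ ⋃_{i=1}^N [α_i, α_i + Δ_i]. Equivalently, Φ_#μ([0,α]) = α_i + Δ_i for α ∈ [α_i, α_i + Δ_i) and Φ_#μ([0,α]) = α otherwise. -/

import Mathlib

open MeasureTheory Set

/-- The survival function `X(l) = mu {z : L z > l}` (as a real number). -/
noncomputable def survival {α : Type*} [MeasurableSpace α] (μ : Measure α) (L : α → ℝ)
    (lam : ℝ) : ℝ :=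
  (μ {z | lam < L z}).toReal

/-- The generalized inverse `Ltilde (ξ) = sup {l ∈ range L : X l > ξ}`. -/
noncomputable def genInv {α : Type*} [MeasurableSpace α] (μ : Measure α) (L : α → ℝ)
    (ξ : ℝ) : ℝ :=
  sSup {lam : ℝ | lam ∈ Set.range L ∧ ξ < survival μ L lam}

/-- The plateau mass `Δ(r) = μ {z : L z = r}` (as a real number). -/
noncomputable def plateau {α : Type*} [MeasurableSpace α] (μ : Measure α) (L : α → ℝ)
    (t : ℝ) : ℝ :=
  (μ {z | L z = t}).toReal

/-- The non-strict survival function `ψ(r) = μ {z : L z ≥ r}` (as a real number). -/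
noncomputable def psi {α : Type*} [MeasurableSpace α] (μ : Measure α) (L : α → ℝ)
    (t : ℝ) : ℝ :=
  (μ {z | t ≤ L z}).toReal

/-! Writing `F` for the distribution function of `L_#μ`, we have `X = 1 - F`. For `t < 1` the
set `{λ | X λ ≤ t}` is therefore a half-line `[β, ∞)` (right-continuity of `F`), with
`X β ≤ t ≤ μ {L ≥ β}` (left limit of `F` at `β`). Hence `μ {Φ ≤ t} = μ {L ≥ β}`, which is `t`
unless `β` is an atom `r_i` with `α_i ≤ t < α_i + Δ_i`, and then it is `α_i + Δ_i`.
The right-hand side is Lebesgue measure on `[0, 1]` with each interval `[α_i, α_i + Δ_i]`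
collapsed to an atom at `α_i`; these intervals overlap only at endpoints since `r` is strictly
increasing, and a direct computation gives it the same distribution function. -/

open Filter Topology ProbabilityTheory Function

theorem StieltjesFunction.exists_le_apply_iff_and_leftLim_le (f : StieltjesFunction ℝ) {s : ℝ}
    (hle : ∃ l, s ≤ f l) (hlt : ∃ l, f l < s) :
    ∃ β, (∀ l, s ≤ f l ↔ β ≤ l) ∧ leftLim f β ≤ s := by
  obtain ⟨l₀, hl₀⟩ := hlt
  have hbdd : BddBelow {l | s ≤ f l} :=
    ⟨l₀, fun l hl => (f.mono.reflect_lt (hl₀.trans_le hl)).le⟩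
  set β := sInf {l | s ≤ f l}
  have hβ : s ≤ f β := by
    refine ge_of_tendsto (f.right_continuous β |>.mono Ioi_subset_Ici_self) ?_
    filter_upwards [self_mem_nhdsWithin] with l hl
    obtain ⟨x, hx, hxl⟩ := (csInf_lt_iff hbdd hle).mp hl
    exact hx.trans (f.mono hxl.le)
  refine ⟨β, fun l => ⟨fun hl => csInf_le hbdd hl, fun hl => hβ.trans (f.mono hl)⟩, ?_⟩
  refine le_of_tendsto (f.mono.tendsto_leftLim β) ?_
  filter_upwards [self_mem_nhdsWithin] with l hl
  exact (not_le.mp fun h => hl.not_ge (csInf_le hbdd h)).le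

lemma measure_diff_iUnion_add_sum_inter {β ι : Type*} [MeasurableSpace β] [Fintype ι]
    {μ : Measure β} {s : Set β} {I : ι → Set β} (hs : MeasurableSet s)
    (hI : ∀ i, MeasurableSet (I i)) (hd : Pairwise (AEDisjoint μ on I)) :
    μ (s \ ⋃ i, I i) + ∑ i, μ (s ∩ I i) = μ s := by
  have hsd : Pairwise (AEDisjoint μ on fun i => s ∩ I i) := fun i j hij =>
    (hd hij).mono inter_subset_right inter_subset_right
  rw [← measure_sdiff_add_inter (μ := μ) s (.iUnion hI), inter_iUnion,
    measure_iUnion₀ hsd fun i => (hs.inter (hI i)).nullMeasurableSet, tsum_fintype]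

lemma volume_Iic_inter_Icc (t a b : ℝ) :
    volume (Iic t ∩ Icc a b) = ENNReal.ofReal (min t b - a) := by
  rw [show Iic t ∩ Icc a b = Icc a (min t b) by ext; simp [and_left_comm],
    Real.volume_Icc]

lemma smul_dirac_Iic (a w t : ℝ) :
    (ENNReal.ofReal w • Measure.dirac a) (Iic t) = volume (Iic t ∩ Icc a (a + w))
      + (Ico a (a + w)).indicator (fun s => ENNReal.ofReal (a + w - s)) t := by
  rw [Measure.smul_apply, Measure.dirac_apply' _ measurableSet_Iic, volume_Iic_inter_Icc]
  rcases lt_or_ge t a with hta | hat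
  · have : min t (a + w) - a ≤ 0 := by linarith [min_le_left t (a + w)]
    simp [hta.not_ge, ENNReal.ofReal_of_nonpos this]
  rcases lt_or_ge t (a + w) with htw | hwt
  · rw [min_eq_left htw.le, indicator_of_mem (show t ∈ Ico a (a + w) from ⟨hat, htw⟩),
      ← ENNReal.ofReal_add (by linarith) (by linarith)]
    simp [hat]
  · simp [hat, min_eq_right hwt, hwt.not_gt]

section CollapsedUniform

variable {ι : Type*} [Fintype ι] {a w : ι → ℝ}

noncomputable def collapsedUniform (a w : ι → ℝ) : Measure ℝ :=
  ∑ i, ENNReal.ofReal (w i) • Measure.dirac (a i)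
    + volume.restrict (Icc 0 1 \ ⋃ i, Icc (a i) (a i + w i))

lemma collapsedUniform_Iic (ha : ∀ i, 0 ≤ a i) (h1 : ∀ i, a i + w i ≤ 1)
    (hd : Pairwise (Disjoint on fun i => Ico (a i) (a i + w i))) (t : ℝ) :
    collapsedUniform a w (Iic t) = ENNReal.ofReal (min t 1)
      + ∑ i, (Ico (a i) (a i + w i)).indicator (fun s => ENNReal.ofReal (a i + w i - s)) t := by
  have hsub : ∀ i, Icc (a i) (a i + w i) ⊆ Icc 0 1 := fun i => Icc_subset_Icc (ha i) (h1 i)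
  have had : Pairwise (AEDisjoint volume on fun i => Icc (a i) (a i + w i)) := fun i j hij =>
    (hd hij).aedisjoint.congr Ico_ae_eq_Icc.symm Ico_ae_eq_Icc.symm
  have hpart := measure_diff_iUnion_add_sum_inter
    (measurableSet_Iic.inter measurableSet_Icc : MeasurableSet (Iic t ∩ Icc (0 : ℝ) 1))
    (fun i => measurableSet_Icc) had
  simp only [inter_assoc, inter_eq_right.mpr (hsub _)] at hpart
  rw [volume_Iic_inter_Icc, sub_zero] at hpart
  rw [collapsedUniform, Measure.add_apply, Measure.finsetSum_apply,
    Measure.restrict_apply measurableSet_Iic, ← hpart]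
  simp only [smul_dirac_Iic, Finset.sum_add_distrib, inter_sdiff_assoc]
  ring

lemma collapsedUniform_Iic_of_mem_Ico (ha : ∀ i, 0 ≤ a i) (h1 : ∀ i, a i + w i ≤ 1)
    (hd : Pairwise (Disjoint on fun i => Ico (a i) (a i + w i)))
    {t : ℝ} {i : ι} (ht : t ∈ Ico (a i) (a i + w i)) :
    collapsedUniform a w (Iic t) = ENNReal.ofReal (a i + w i) := by
  rw [collapsedUniform_Iic ha h1 hd, Finset.sum_eq_single i, indicator_of_mem ht,
    min_eq_left (ht.2.le.trans (h1 i)),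
    ← ENNReal.ofReal_add ((ha i).trans ht.1) (sub_nonneg.mpr ht.2.le), add_sub_cancel]
  · exact fun j _ hji => indicator_of_notMem (disjoint_left.mp (hd hji).symm ht) _
  · simp

lemma collapsedUniform_Iic_of_forall_notMem_Ico (ha : ∀ i, 0 ≤ a i) (h1 : ∀ i, a i + w i ≤ 1)
    (hd : Pairwise (Disjoint on fun i => Ico (a i) (a i + w i)))
    {t : ℝ} (ht : ∀ i, t ∉ Ico (a i) (a i + w i)) :
    collapsedUniform a w (Iic t) = ENNReal.ofReal (min t 1) := by
  simp [collapsedUniform_Iic ha h1 hd, ht]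

end CollapsedUniform

section Survival

variable {α : Type*} [MeasurableSpace α] {μ : Measure α} {L : α → ℝ} {t : ℝ}

lemma survival_nonneg (l : ℝ) : 0 ≤ survival μ L l := ENNReal.toReal_nonneg

variable [IsProbabilityMeasure μ]

lemma survival_le_one (l : ℝ) : survival μ L l ≤ 1 := measureReal_le_one

lemma survival_antitone : Antitone (survival μ L) := fun _ _ h =>
  measureReal_mono fun _ hz => h.trans_lt hz

lemma psi_le_one (l : ℝ) : psi μ L l ≤ 1 := measureReal_le_one

lemma ofReal_plateau (l : ℝ) : ENNReal.ofReal (plateau μ L l) = μ {z | L z = l} :=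
  ENNReal.ofReal_toReal (measure_ne_top _ _)

lemma ofReal_psi (l : ℝ) : ENNReal.ofReal (psi μ L l) = μ {z | l ≤ L z} :=
  ENNReal.ofReal_toReal (measure_ne_top _ _)

lemma psi_le_survival_of_lt {s l : ℝ} (h : s < l) : psi μ L l ≤ survival μ L s :=
  measureReal_mono fun _ hz => h.trans_le hz

lemma survival_add_plateau (hL : Measurable L) (l : ℝ) :
    survival μ L l + plateau μ L l = psi μ L l := by
  have hsplit : {z | l ≤ L z} = {z | l < L z} ∪ {z | L z = l} := by
    ext z
    simp [le_iff_lt_or_eq, eq_comm]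
  have hmeas : MeasurableSet {z | L z = l} := hL (measurableSet_singleton l)
  rw [psi, ← measureReal_def, hsplit, measureReal_union _ hmeas]
  · rfl
  · exact disjoint_left.mpr fun z hlt heq => hlt.ne' heq

lemma survival_eq_one_sub_cdf (hL : Measurable L) (l : ℝ) :
    survival μ L l = 1 - cdf (μ.map L) l := by
  have := Measure.isProbabilityMeasure_map (μ := μ) hL.aemeasurable
  rw [cdf_eq_real, ← probReal_compl_eq_one_sub measurableSet_Iic, compl_Iic, measureReal_def,
    Measure.map_apply hL measurableSet_Ioi]
  rfl

lemma psi_eq_one_sub_leftLim_cdf (hL : Measurable L) (l : ℝ) :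
    psi μ L l = 1 - leftLim (cdf (μ.map L)) l := by
  have := Measure.isProbabilityMeasure_map (μ := μ) hL.aemeasurable
  have h := (cdf (μ.map L)).measure_Ici (tendsto_cdf_atTop _) l
  rw [measure_cdf, Measure.map_apply hL measurableSet_Ici] at h
  rw [psi, show {z | l ≤ L z} = L ⁻¹' Ici l from rfl, h, ENNReal.toReal_ofReal]
  linarith [(cdf (μ.map L)).mono.leftLim_le (le_refl l), cdf_le_one (μ.map L) l]

lemma tendsto_survival_atTop (hL : Measurable L) : Tendsto (survival μ L) atTop (𝓝 0) := by
  simpa [funext (survival_eq_one_sub_cdf hL)] using (tendsto_cdf_atTop (μ.map L)).const_sub 1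

lemma tendsto_survival_atBot (hL : Measurable L) : Tendsto (survival μ L) atBot (𝓝 1) := by
  simpa [funext (survival_eq_one_sub_cdf hL)] using (tendsto_cdf_atBot (μ.map L)).const_sub 1

lemma exists_survival_le_iff (hL : Measurable L) (hle : ∃ l, survival μ L l ≤ t)
    (hlt : ∃ l, t < survival μ L l) :
    ∃ β, (∀ l, survival μ L l ≤ t ↔ β ≤ l) ∧ t ≤ psi μ L β := by
  simp only [survival_eq_one_sub_cdf hL] at hle hlt
  obtain ⟨β, hβ, hlim⟩ := (cdf (μ.map L)).exists_le_apply_iff_and_leftLim_le (s := 1 - t)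
    (hle.imp fun _ _ => by linarith) (hlt.imp fun _ _ => by linarith)
  refine ⟨β, fun l => ?_, by linarith [psi_eq_one_sub_leftLim_cdf (μ := μ) hL β]⟩
  rw [survival_eq_one_sub_cdf hL, ← hβ]
  constructor <;> intro <;> linarith

lemma measure_survival_comp_le_of_iff {β : ℝ} (hβ : ∀ l, survival μ L l ≤ t ↔ β ≤ l) :
    μ {x | survival μ L (L x) ≤ t} = ENNReal.ofReal (psi μ L β) := by
  rw [ofReal_psi]
  exact congrArg μ (ext fun x => hβ (L x))

lemma measure_survival_comp_le_of_mem_Ico (hL : Measurable L) {r : ℝ}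
    (ht : t ∈ Ico (survival μ L r) (psi μ L r)) :
    μ {x | survival μ L (L x) ≤ t} = ENNReal.ofReal (psi μ L r) := by
  obtain ⟨β, hβ, -⟩ := exists_survival_le_iff hL ⟨r, ht.1⟩
    ⟨r - 1, ht.2.trans_le (psi_le_survival_of_lt (sub_one_lt r))⟩
  have hβr : β = r := by
    refine ((hβ r).mp ht.1).antisymm (not_lt.mp fun hlt => ?_)
    exact (ht.2.trans_le (psi_le_survival_of_lt hlt)).not_ge ((hβ β).mpr le_rfl)
  rw [measure_survival_comp_le_of_iff hβ, hβr]

lemma measure_survival_comp_le_of_forall_notMem_Ico (hL : Measurable L)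
    (ht : ∀ r, t ∉ Ico (survival μ L r) (psi μ L r)) :
    μ {x | survival μ L (L x) ≤ t} = ENNReal.ofReal (min t 1) := by
  by_cases hle : ∃ l, survival μ L l ≤ t
  · rcases le_or_gt 1 t with h1 | h1
    · rw [min_eq_right h1, ENNReal.ofReal_one, ← measure_univ (μ := μ)]
      exact congrArg μ (eq_univ_of_forall fun x => (survival_le_one _).trans h1)
    · have hlt : ∃ l, t < survival μ L l :=
        ((tendsto_survival_atBot hL).eventually (lt_mem_nhds h1)).exists
      obtain ⟨β, hβ, htβ⟩ := exists_survival_le_iff hL hle hlt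
      have hβt : psi μ L β ≤ t := not_lt.mp fun h => ht β ⟨(hβ β).mpr le_rfl, h⟩
      rw [measure_survival_comp_le_of_iff hβ, min_eq_left h1.le, hβt.antisymm htβ]
  · push Not at hle
    have ht0 : t ≤ 0 := not_lt.mp fun h =>
      let ⟨l, hl⟩ := ((tendsto_survival_atTop hL).eventually (gt_mem_nhds h)).exists
      (hle l).not_gt hl
    rw [ENNReal.ofReal_of_nonpos ((min_le_left t 1).trans ht0)]
    exact (congrArg μ (eq_empty_of_forall_notMem fun x hx => (hle (L x)).not_ge hx)).trans
      measure_empty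

lemma pairwise_disjoint_Ico_survival_psi {ι : Type*} [LinearOrder ι] {r : ι → ℝ}
    (hr : StrictMono r) :
    Pairwise (Disjoint on fun i => Ico (survival μ L (r i)) (psi μ L (r i))) := by
  refine (pairwise_disjoint_on _).mpr fun i j hij => disjoint_left.mpr fun x hi hj => ?_
  exact (hj.2.trans_le (psi_le_survival_of_lt (hr hij))).not_ge hi.1

end Survival

theorem pushforward_eq_diracSum_add_restrict_general
    {d : ℕ} (Ω : Set (Fin d → ℝ)) (μ : Measure Ω) [IsProbabilityMeasure μ]
    (L : Ω → ℝ) (hL : Measurable L)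
    (N : ℕ) (r : Fin N → ℝ) (hr : StrictMono r)
    (hnonatom : ∀ s : ℝ, s ∉ Set.range r → μ {z | L z = s} = 0) :
    Measure.map (fun x => survival μ L (L x)) μ
      = (∑ i : Fin N, μ {z | L z = r i} • Measure.dirac (survival μ L (r i)))
        + volume.restrict (Set.Icc (0:ℝ) 1 \
            ⋃ i : Fin N,
              Set.Icc (survival μ L (r i)) (survival μ L (r i) + plateau μ L (r i))) := by
  have hψ i : survival μ L (r i) + plateau μ L (r i) = psi μ L (r i) := survival_add_plateau hL _
  have ha i : 0 ≤ survival μ L (r i) := survival_nonneg _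
  have h1 i : survival μ L (r i) + plateau μ L (r i) ≤ 1 := hψ i ▸ psi_le_one _
  have hd : Pairwise (Disjoint on fun i =>
      Ico (survival μ L (r i)) (survival μ L (r i) + plateau μ L (r i))) := by
    simpa only [hψ] using pairwise_disjoint_Ico_survival_psi hr
  simp_rw [← ofReal_plateau]
  refine Measure.ext_of_Iic _ (collapsedUniform _ _) fun t => ?_
  have hmeas : Measurable fun x => survival μ L (L x) := survival_antitone.measurable.comp hL
  rw [Measure.map_apply hmeas measurableSet_Iic]
  by_cases ht : ∃ i, t ∈ Ico (survival μ L (r i)) (survival μ L (r i) + plateau μ L (r i))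
  · obtain ⟨i, hi⟩ := ht
    rw [collapsedUniform_Iic_of_mem_Ico ha h1 hd hi, hψ]
    exact measure_survival_comp_le_of_mem_Ico hL (hψ i ▸ hi)
  · push Not at ht
    rw [collapsedUniform_Iic_of_forall_notMem_Ico ha h1 hd ht]
    refine measure_survival_comp_le_of_forall_notMem_Ico hL fun s hs => ?_
    by_cases hsr : s ∈ range r
    · obtain ⟨i, rfl⟩ := hsr
      exact ht i (hψ i ▸ hs)
    · rw [← survival_add_plateau hL, plateau, hnonatom s hsr, ENNReal.toReal_zero, add_zero] at hs
      exact hs.1.not_gt hs.2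

/-- Under the finite-atom assumption, the pushforward measure `Φ_#μ`
on [0,1] is the sum of the point masses `Σ Δ_i · δ_(α_i)` and the restriction of
Lebesgue measure to `[0,1] \\ ⋃ [α_i, α_i + Δ_i]`. -/
theorem pushforward_eq_diracSum_add_restrict
    {d : ℕ} (Ω : Set (Fin d → ℝ)) (μ : Measure Ω) [IsProbabilityMeasure μ]
    (L : Ω → ℝ) (hL : Measurable L)
    (hbd : ∃ a b : ℝ, ∀ x, a ≤ L x ∧ L x ≤ b)
    (N : ℕ) (r : Fin N → ℝ) (hr : StrictMono r)
    (hatom : ∀ i : Fin N, 0 < μ {z | L z = r i})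
    (hnonatom : ∀ s : ℝ, s ∉ Set.range r → μ {z | L z = s} = 0) :
    Measure.map (fun x => survival μ L (L x)) μ
      = (∑ i : Fin N, μ {z | L z = r i} • Measure.dirac (survival μ L (r i)))
        + volume.restrict (Set.Icc (0:ℝ) 1 \
            ⋃ i : Fin N,
              Set.Icc (survival μ L (r i)) (survival μ L (r i) + plateau μ L (r i))) :=
  pushforward_eq_diracSum_add_restrict_general Ω μ L hL N r hr hnonatom
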